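/- There exist universal constants c > 0 and δ0 > 0 such that the following holds. Let G = (V, E, w) be a weighted graph with doubling dimension ddim ≥ 1. Then G admits a strong (c · ddim, δ0)-padded decomposition scheme: for every Δ > 0 there is a probability distribution D over partitions of V such that every partition in the support of D is strongly Δ-bounded, and for every z ∈ V and every 0 ≤ γ ≤ δ0, Pr_{P∼D}[B_G(z, γΔ) ⊆ P(z)] ≥ e^{-c·ddim·γ}. -/

import Mathlib

open MeasureTheory

namespace Pad

variable {V : Type*}

/-- The weight of a walk: the sum of the weights of its edges. -/
def walkWeight (w : Sym2 V → ℝ) {G : SimpleGraph V} {u v : V} (p : G.Walk u v) : ℝ :=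
  (p.darts.map fun d => w d.edge).sum

/-- Shortest-path distance in the weighted graph `(G, w)`. -/
noncomputable def wdist (w : Sym2 V → ℝ) (G : SimpleGraph V) (u v : V) : ℝ :=
  sInf {x | ∃ p : G.Walk u v, x = walkWeight w p}

/-- Distance from a vertex to a set of vertices. -/
noncomputable def wdistSet (w : Sym2 V → ℝ) (G : SimpleGraph V) (v : V) (A : Set V) : ℝ :=
  sInf {x | ∃ a ∈ A, x = wdist w G v a}

/-- The closed ball of radius `r` around `v`. -/
def ball (w : Sym2 V → ℝ) (G : SimpleGraph V) (v : V) (r : ℝ) : Set V :=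
  {u | wdist w G v u ≤ r}

/-- Weight of a walk of an induced subgraph, measured with the weights of `G`. -/
def walkWeightI (w : Sym2 V → ℝ) {G : SimpleGraph V} {C : Set V} {u v : C}
    (p : (G.induce C).Walk u v) : ℝ :=
  (p.darts.map fun d => w (Sym2.map Subtype.val d.edge)).sum

/-- The cluster `C` has strong diameter at most `Δ`: every two vertices of `C` are joined,
inside the induced subgraph `G[C]`, by a walk of weight at most `Δ`. -/
def StronglyBounded (w : Sym2 V → ℝ) (G : SimpleGraph V) (C : Set V) (Δ : ℝ) : Prop :=
  ∀ u v : C, ∃ p : (G.induce C).Walk u v, walkWeightI w p ≤ Δ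

/-- A partition of `V`, given by the map `cl` sending a vertex to its cluster. -/
structure Partition (V : Type*) where
  cl : V → Set V
  mem_cl : ∀ v, v ∈ cl v
  cl_eq : ∀ u v, u ∈ cl v → cl u = cl v

/-- A partition is strongly `Δ`-bounded if each of its clusters has strong diameter at most `Δ`. -/
def Partition.StronglyBounded (w : Sym2 V → ℝ) (G : SimpleGraph V) (P : Partition V)
    (Δ : ℝ) : Prop :=
  ∀ v : V, Pad.StronglyBounded w G (P.cl v) Δ

/-- `(G, w)` has doubling dimension `ddim`: every ball of radius `2r` can be covered by
`2 ^ ddim` balls of radius `r`. -/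
def Doubling (w : Sym2 V → ℝ) (G : SimpleGraph V) (ddim : ℝ) : Prop :=
  ∀ (x : V) (r : ℝ), 0 < r → ∃ T : Set V, T.Finite ∧ ((T.ncard : ℝ) ≤ (2 : ℝ) ^ ddim) ∧
    ball w G x (2 * r) ⊆ ⋃ y ∈ T, ball w G y r

/-- `G` has the complete graph `K_r` as a minor: there are `r` pairwise disjoint connected
branch sets with an edge of `G` between any two of them. -/
def HasCliqueMinor (G : SimpleGraph V) (r : ℕ) : Prop :=
  ∃ B : Fin r → Set V,
    (∀ i, (G.induce (B i)).Connected) ∧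
    (Pairwise fun i j => Disjoint (B i) (B j)) ∧
    ∀ i j : Fin r, i ≠ j → ∃ u ∈ B i, ∃ v ∈ B j, G.Adj u v

/-- A shortest path: a path whose weight equals the distance between its endpoints. -/
def IsShortestPath (w : Sym2 V → ℝ) (G : SimpleGraph V) {u v : V} (p : G.Walk u v) : Prop :=
  p.IsPath ∧ walkWeight w p = wdist w G u v

/-- `G` has an `r`-core with radius `Δ`: there are at most `r` shortest paths such that every
vertex is within distance `Δ` of their union. -/
def HasCore (w : Sym2 V → ℝ) (G : SimpleGraph V) (r : ℕ) (Δ : ℝ) : Prop :=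
  ∃ r' : ℕ, r' ≤ r ∧ ∃ (a b : Fin r' → V) (p : ∀ i, G.Walk (a i) (b i)),
    (∀ i, IsShortestPath w G (p i)) ∧
    ∀ v : V, ∃ i, ∃ u ∈ (p i).support, wdist w G v u ≤ Δ

end Pad

/-!
Fix a `Δ/4`-net `N`. Every net point `u` draws an independent shift `ω u ∈ {0, …, K}` from a
geometric distribution of ratio `q = exp (-48 ddim ε / Δ)` (truncated at `K`, with `ε K = Δ/8`),
and every vertex `y` joins the net point maximising `ε ω u - d(u, y)`. A vertex on a shortest path
from its centre to `y` chooses the same centre, so clusters contain these paths and have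
strong diameter at most `2 (Δ/4 + Δ/8)`. The ball `B(z, γΔ)` lies in one cluster as soon as
the winner at `z` beats every other centre by `2γΔ`. Raising the winner's shift by
`s ≈ 2γΔ/ε` creates such a gap, at the price of a factor `q ^ s` and of the truncation tail;
summing over the at most `4 ^ ddim` centres that can win at `z` gives `exp (-576 ddim γ)`.
The step `ε` is taken below the least positive distance, so smaller balls consist of points at
distance `0` from `z` and are never cut.
-/

open SimpleGraph Real

open Classical in
lemma PMF.exists_toOuterMeasure_eq_sum {α β : Type*} [Fintype α] (p : α → ℝ)
    (hp0 : ∀ a, 0 ≤ p a) (hp1 : ∑ a, p a = 1) (g : α → β) :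
    ∃ D : PMF β, D.support ⊆ Set.range g ∧ ∀ S : Set β,
      D.toOuterMeasure S = ENNReal.ofReal (∑ a ∈ Finset.univ.filter (g · ∈ S), p a) := by
  have hsum : ∑ a, ENNReal.ofReal (p a) = 1 := by
    rw [← ENNReal.ofReal_sum_of_nonneg fun a _ => hp0 a, hp1, ENNReal.ofReal_one]
  refine ⟨(PMF.ofFintype _ hsum).map g, fun b hb => ?_, fun S => ?_⟩
  · obtain ⟨a, -, rfl⟩ := (PMF.support_map _ _ ▸ hb : b ∈ g '' _)
    exact ⟨a, rfl⟩
  · rw [PMF.toOuterMeasure_map_apply, PMF.toOuterMeasure_apply, tsum_fintype,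
      ENNReal.ofReal_sum_of_nonneg fun a _ => hp0 a, Finset.sum_filter]
    refine Finset.sum_congr rfl fun a _ => ?_
    by_cases h : g a ∈ S
    · rw [Set.indicator_of_mem (show a ∈ g ⁻¹' S from h), if_pos h, PMF.ofFintype_apply]
    · rw [Set.indicator_of_notMem (show a ∉ g ⁻¹' S from h), if_neg h]

namespace Pad

section Metric

variable {V : Type*} {G : SimpleGraph V} {w : Sym2 V → ℝ}

@[simp]
lemma walkWeight_nil {u : V} : walkWeight w (Walk.nil : G.Walk u u) = 0 := by
  simp [walkWeight]

lemma walkWeight_eq_sum_edges {u v : V} (p : G.Walk u v) :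
    walkWeight w p = (p.edges.map w).sum := by
  simp [walkWeight, Walk.edges, List.map_map]; rfl

lemma walkWeight_append {u v x : V} (p : G.Walk u v) (q : G.Walk v x) :
    walkWeight w (p.append q) = walkWeight w p + walkWeight w q := by
  simp [walkWeight, Walk.darts_append]

lemma walkWeight_reverse {u v : V} (p : G.Walk u v) :
    walkWeight w p.reverse = walkWeight w p := by
  simp [walkWeight_eq_sum_edges, Walk.edges_reverse, List.sum_reverse]

lemma walkWeight_nonneg (hw : ∀ e, 0 ≤ w e) {u v : V} (p : G.Walk u v) :
    0 ≤ walkWeight w p := by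
  rw [walkWeight_eq_sum_edges]
  exact List.sum_nonneg (by simpa using fun e _ => hw e)

lemma walkWeight_bypass_le [DecidableEq V] (hw : ∀ e, 0 ≤ w e) {u v : V} (p : G.Walk u v) :
    walkWeight w p.bypass ≤ walkWeight w p := by
  obtain ⟨l, hperm, hsub⟩ :=
    p.bypass_isPath.edges_nodup.subperm (Walk.edges_bypass_subset_edges p)
  rw [walkWeight_eq_sum_edges, walkWeight_eq_sum_edges, ← (hperm.map w).sum_eq]
  exact (hsub.map w).sum_le_sum (by simpa using fun e _ => hw e)

lemma wdist_le_walkWeight (hw : ∀ e, 0 ≤ w e) {u v : V} (p : G.Walk u v) :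
    wdist w G u v ≤ walkWeight w p :=
  csInf_le ⟨0, by rintro _ ⟨p, rfl⟩; exact walkWeight_nonneg hw p⟩ ⟨p, rfl⟩

lemma wdist_nonneg (hw : ∀ e, 0 ≤ w e) (u v : V) : 0 ≤ wdist w G u v :=
  Real.sInf_nonneg (by rintro _ ⟨p, rfl⟩; exact walkWeight_nonneg hw p)

lemma wdist_self (hw : ∀ e, 0 ≤ w e) (u : V) : wdist w G u u = 0 :=
  le_antisymm ((wdist_le_walkWeight hw Walk.nil).trans_eq walkWeight_nil) (wdist_nonneg hw u u)

lemma wdist_comm (u v : V) : wdist w G u v = wdist w G v u :=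
  congrArg sInf <| Set.ext fun _ =>
    ⟨fun ⟨p, hp⟩ => ⟨p.reverse, hp.trans (walkWeight_reverse p).symm⟩,
      fun ⟨p, hp⟩ => ⟨p.reverse, hp.trans (walkWeight_reverse p).symm⟩⟩

/-- The infimum may be taken over the finitely many paths, since `bypass` shortens every walk to a
path. -/
lemma exists_walkWeight_eq_wdist [Finite V] (hw : ∀ e, 0 ≤ w e) (hG : G.Connected) (u v : V) :
    ∃ p : G.Walk u v, walkWeight w p = wdist w G u v := by
  classical
  have : Fintype V := Fintype.ofFinite V
  obtain ⟨p₀⟩ := hG u v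
  obtain ⟨q, -, hq⟩ := Set.exists_min_image (Set.univ : Set {p : G.Walk u v // p.IsPath})
    (fun p => walkWeight w p.1) Set.finite_univ ⟨⟨_, p₀.bypass_isPath⟩, trivial⟩
  refine ⟨q.1, le_antisymm ?_ (wdist_le_walkWeight hw q.1)⟩
  refine le_csInf ⟨_, p₀, rfl⟩ ?_
  rintro _ ⟨p, rfl⟩
  exact (hq ⟨_, p.bypass_isPath⟩ trivial).trans (walkWeight_bypass_le hw p)

lemma wdist_triangle [Finite V] (hw : ∀ e, 0 ≤ w e) (hG : G.Connected) (u x v : V) :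
    wdist w G u v ≤ wdist w G u x + wdist w G x v := by
  obtain ⟨p, hp⟩ := exists_walkWeight_eq_wdist hw hG u x
  obtain ⟨q, hq⟩ := exists_walkWeight_eq_wdist hw hG x v
  calc wdist w G u v ≤ walkWeight w (p.append q) := wdist_le_walkWeight hw _
    _ = wdist w G u x + wdist w G x v := by rw [walkWeight_append, hp, hq]

lemma wdist_add_wdist_le_walkWeight (hw : ∀ e, 0 ≤ w e) {u v x : V} (p : G.Walk u v)
    (hx : x ∈ p.support) :
    wdist w G u x + wdist w G x v ≤ walkWeight w p := by
  classical
  conv_rhs => rw [← p.take_spec hx, walkWeight_append]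
  exact add_le_add (wdist_le_walkWeight hw _) (wdist_le_walkWeight hw _)

lemma walkWeightI_induce {C : Set V} {u v : V} (p : G.Walk u v)
    (hp : ∀ x ∈ p.support, x ∈ C) :
    walkWeightI w (p.induce C hp) = walkWeight w p := by
  induction p with
  | nil => simp [walkWeightI]
  | cons h p ih =>
    simp only [walkWeightI, walkWeight, Walk.induce_cons, Walk.darts_cons, List.map_cons,
      List.sum_cons] at ih ⊢
    rw [ih]
    rfl

lemma stronglyBounded_of_forall_walk {C : Set V} {u : V} {r : ℝ}
    (h : ∀ a ∈ C, ∃ p : G.Walk u a, walkWeight w p ≤ r ∧ ∀ x ∈ p.support, x ∈ C) :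
    StronglyBounded w G C (2 * r) := by
  rintro ⟨a, ha⟩ ⟨b, hb⟩
  obtain ⟨p, hpr, hpC⟩ := h a ha
  obtain ⟨q, hqr, hqC⟩ := h b hb
  have hC : ∀ x ∈ (p.reverse.append q).support, x ∈ C := by
    intro x hx
    rw [Walk.mem_support_append_iff, Walk.support_reverse, List.mem_reverse] at hx
    exact hx.elim (hpC x) (hqC x)
  refine ⟨(p.reverse.append q).induce C hC, ?_⟩
  rw [walkWeightI_induce, walkWeight_append, walkWeight_reverse]
  linarith

lemma StronglyBounded.mono {C : Set V} {Δ Δ' : ℝ} (h : StronglyBounded w G C Δ)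
    (hΔ : Δ ≤ Δ') : StronglyBounded w G C Δ' :=
  fun u v => let ⟨p, hp⟩ := h u v; ⟨p, hp.trans hΔ⟩

def Partition.ofFun {α : Type*} (f : V → α) : Partition V where
  cl y := {x | f x = f y}
  mem_cl _ := rfl
  cl_eq u v h := by
    ext x
    exact iff_of_eq (congrArg (f x = ·) h)

/-- A separated set of maximal cardinality is also covering. -/
lemma exists_net [Fintype V] (hw : ∀ e, 0 ≤ w e) {r : ℝ} (hr : 0 ≤ r) :
    ∃ N : Finset V, (∀ u ∈ N, ∀ v ∈ N, u ≠ v → r < wdist w G u v) ∧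
      ∀ y, ∃ u ∈ N, wdist w G u y ≤ r := by
  classical
  set separated := Finset.univ.powerset.filter
    fun S : Finset V => ∀ u ∈ S, ∀ v ∈ S, u ≠ v → r < wdist w G u v
  obtain ⟨N, hN, hmax⟩ := separated.exists_max_image Finset.card ⟨∅, by simp [separated]⟩
  have hsep := (Finset.mem_filter.1 hN).2
  refine ⟨N, hsep, fun y => ?_⟩
  by_contra! hfar
  have hy : y ∉ N := fun hy => (hfar y hy).not_ge (by rw [wdist_self hw]; exact hr)
  have hins : insert y N ∈ separated := by
    refine Finset.mem_filter.2 ⟨Finset.mem_powerset.2 (Finset.subset_univ _), ?_⟩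
    simp only [Finset.mem_insert]
    rintro u (rfl | hu) v (rfl | hv) huv
    · exact absurd rfl huv
    · exact wdist_comm (G := G) u v ▸ hfar v hv
    · exact hfar u hu
    · exact hsep u hu v hv huv
  have := hmax _ hins
  rw [Finset.card_insert_of_notMem hy] at this
  omega

lemma card_le_card_of_separated [Finite V] (hw : ∀ e, 0 ≤ w e) (hG : G.Connected)
    {S T : Finset V} {r : ℝ}
    (hS : ∀ u ∈ S, ∀ v ∈ S, u ≠ v → 2 * r < wdist w G u v)
    (hST : ∀ u ∈ S, ∃ y ∈ T, wdist w G y u ≤ r) : S.card ≤ T.card := by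
  choose! f hfT hf using hST
  refine Finset.card_le_card_of_injOn f hfT fun u hu v hv huv => by_contra fun hne => ?_
  have hfv : wdist w G (f u) v ≤ r := huv ▸ hf v hv
  linarith [hS u hu v hv hne, wdist_triangle hw hG u (f u) v, wdist_comm (w := w) (G := G) u (f u),
    hf u hu]

lemma Doubling.exists_cover_four_mul {d : ℝ} (hdoub : Doubling w G d) (x : V) {r : ℝ}
    (hr : 0 < r) : ∃ T : Finset V, (T.card : ℝ) ≤ 2 ^ d * 2 ^ d ∧
      ∀ u, wdist w G x u ≤ 4 * r → ∃ y ∈ T, wdist w G y u ≤ r := by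
  classical
  obtain ⟨T₁, hT₁, hT₁card, hT₁cov⟩ := hdoub x (2 * r) (by positivity)
  choose T₂ hT₂ hT₂card hT₂cov using fun y : V => hdoub y r hr
  refine ⟨hT₁.toFinset.biUnion fun y => (hT₂ y).toFinset, ?_, fun u hu => ?_⟩
  · calc ((hT₁.toFinset.biUnion fun y => (hT₂ y).toFinset).card : ℝ)
        ≤ ∑ y ∈ hT₁.toFinset, ((hT₂ y).toFinset.card : ℝ) := by
          exact_mod_cast Finset.card_biUnion_le
      _ ≤ ∑ _y ∈ hT₁.toFinset, (2 : ℝ) ^ d :=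
          Finset.sum_le_sum fun y _ => (Set.ncard_eq_toFinset_card _ (hT₂ y)) ▸ hT₂card y
      _ ≤ 2 ^ d * 2 ^ d := by
          rw [Finset.sum_const, nsmul_eq_mul, ← Set.ncard_eq_toFinset_card _ hT₁]
          exact mul_le_mul_of_nonneg_right hT₁card (by positivity)
  · obtain ⟨y, hy, hyu⟩ :=
      Set.mem_iUnion₂.1 (hT₁cov (show wdist w G x u ≤ 2 * (2 * r) by linarith))
    obtain ⟨z, hz, hzu⟩ := Set.mem_iUnion₂.1 (hT₂cov y hyu)
    exact ⟨z, Finset.mem_biUnion.2 ⟨y, hT₁.mem_toFinset.2 hy, (hT₂ y).mem_toFinset.2 hz⟩,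
      hzu⟩

lemma Doubling.card_le_of_separated [Finite V] (hw : ∀ e, 0 ≤ w e) (hG : G.Connected) {d : ℝ}
    (hdoub : Doubling w G d) {S : Finset V} {x : V} {r : ℝ} (hr : 0 < r)
    (hS : ∀ u ∈ S, ∀ v ∈ S, u ≠ v → 2 * r < wdist w G u v)
    (hSx : ∀ u ∈ S, wdist w G x u ≤ 4 * r) : (S.card : ℝ) ≤ 2 ^ d * 2 ^ d := by
  obtain ⟨T, hT, hcov⟩ := hdoub.exists_cover_four_mul x hr
  have := card_le_card_of_separated hw hG hS fun u hu => hcov u (hSx u hu)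
  exact le_trans (by exact_mod_cast this) hT

lemma exists_pos_le_wdist [Finite V] :
    ∃ δ > 0, ∀ x y : V, 0 < wdist w G x y → δ ≤ wdist w G x y := by
  by_cases h : ∃ p : V × V, 0 < wdist w G p.1 p.2
  · have : Nonempty {p : V × V // 0 < wdist w G p.1 p.2} :=
      let ⟨p, hp⟩ := h; ⟨⟨p, hp⟩⟩
    obtain ⟨p, hp⟩ := Finite.exists_min fun p : {p : V × V // 0 < wdist w G p.1 p.2} =>
      wdist w G p.1.1 p.1.2
    exact ⟨_, p.2, fun x y hxy => hp ⟨(x, y), hxy⟩⟩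
  · exact ⟨1, one_pos, fun x y hxy => absurd ⟨(x, y), hxy⟩ h⟩

end Metric

section Argmax

variable {ι : Type*}

noncomputable def argmax [Fintype ι] [Nonempty ι] (f : ι → ℝ) : ι :=
  (Finite.exists_max fun u => toLex (f u, Fintype.equivFin ι u)).choose

def HasGap (t : ℝ) (f : ι → ℝ) (u : ι) : Prop :=
  ∀ v, v ≠ u → f v + t < f u

lemma HasGap.eq {t : ℝ} {f : ι → ℝ} {u u' : ι} (h : HasGap t f u) (h' : HasGap t f u')
    (ht : 0 ≤ t) : u = u' := by
  by_contra hne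
  linarith [h u' (Ne.symm hne), h' u hne]

variable [Fintype ι] [Nonempty ι]

lemma toLex_le_toLex_argmax (f : ι → ℝ) (v : ι) :
    toLex (f v, Fintype.equivFin ι v) ≤ toLex (f (argmax f), Fintype.equivFin ι (argmax f)) :=
  (Finite.exists_max fun u => toLex (f u, Fintype.equivFin ι u)).choose_spec v

lemma le_argmax (f : ι → ℝ) (v : ι) : f v ≤ f (argmax f) := by
  rcases Prod.Lex.toLex_le_toLex.1 (toLex_le_toLex_argmax f v) with h | h
  exacts [h.le, h.1.le]

lemma argmax_eq_of_forall_lt {f : ι → ℝ} {u : ι} (h : ∀ v, v ≠ u → f v < f u) :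
    argmax f = u := by
  by_contra hne
  exact (h _ hne).not_ge (le_argmax f u)

/-- The tie-break is consistent because it does not depend on the function. -/
lemma argmax_eq_of_sub_le {f g : ι → ℝ} {u : ι} (hf : argmax f = u)
    (h : ∀ v, f u - f v ≤ g u - g v) : argmax g = u := by
  by_contra hne
  have hfu := toLex_le_toLex_argmax f (argmax g)
  have hgu := toLex_le_toLex_argmax g u
  rw [hf] at hfu
  have := h (argmax g)
  rw [Prod.Lex.toLex_le_toLex] at hfu hgu
  have heq : Fintype.equivFin ι (argmax g) = Fintype.equivFin ι u := by
    rcases hfu with hfu | ⟨hfu, hfu'⟩ <;> rcases hgu with hgu | ⟨hgu, hgu'⟩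
    all_goals first | (exfalso; linarith) | exact le_antisymm hfu' hgu'
  exact hne ((Fintype.equivFin ι).injective heq)

end Argmax

section ShiftDistribution

variable {ι : Type*} [Fintype ι] {K : ℕ} {q : ℝ}

noncomputable def geomMass (K : ℕ) (q : ℝ) (k : Fin (K + 1)) : ℝ :=
  (1 - q) * q ^ (k : ℕ) / (1 - q ^ (K + 1))

noncomputable def shiftMass (K : ℕ) (q : ℝ) (ω : ι → Fin (K + 1)) : ℝ :=
  ∏ i, geomMass K q (ω i)

lemma geomMass_nonneg (hq0 : 0 ≤ q) (hq1 : q < 1) (k : Fin (K + 1)) : 0 ≤ geomMass K q k := by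
  have : q ^ (K + 1) < 1 := pow_lt_one₀ hq0 hq1 K.succ_ne_zero
  unfold geomMass
  exact div_nonneg (mul_nonneg (by linarith) (pow_nonneg hq0 _)) (by linarith)

lemma sum_geomMass_tail (hq0 : 0 ≤ q) (hq1 : q < 1) {m : ℕ} (hm : m ≤ K + 1) :
    ∑ k ∈ Finset.univ.filter (fun k : Fin (K + 1) => m ≤ (k : ℕ)), geomMass K q k
      = (q ^ m - q ^ (K + 1)) / (1 - q ^ (K + 1)) := by
  have hq : q ^ (K + 1) < 1 := pow_lt_one₀ hq0 hq1 K.succ_ne_zero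
  rw [Finset.sum_filter]
  unfold geomMass
  rw [Fin.sum_univ_eq_sum_range
    (fun k => if m ≤ k then (1 - q) * q ^ k / (1 - q ^ (K + 1)) else 0), ← Finset.sum_filter,
    Finset.range_eq_Ico, Finset.Ico_filter_le, max_eq_right (Nat.zero_le m), ← Finset.sum_div,
    ← Finset.mul_sum, geom_sum_Ico hq1.ne hm]
  field_simp [(sub_pos.2 hq1).ne', (sub_neg.2 hq1).ne]
  ring

lemma sum_geomMass (hq0 : 0 ≤ q) (hq1 : q < 1) : ∑ k, geomMass K q k = 1 := by
  have hq : q ^ (K + 1) < 1 := pow_lt_one₀ hq0 hq1 K.succ_ne_zero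
  simpa [div_self (sub_pos.2 hq).ne'] using sum_geomMass_tail hq0 hq1 (K.zero_le.trans K.le_succ)

lemma shiftMass_nonneg (hq0 : 0 ≤ q) (hq1 : q < 1) (ω : ι → Fin (K + 1)) :
    0 ≤ shiftMass K q ω :=
  Finset.prod_nonneg fun i _ => geomMass_nonneg hq0 hq1 (ω i)

variable [DecidableEq ι]

open Classical in
noncomputable def shiftProb (K : ℕ) (q : ℝ) (E : (ι → Fin (K + 1)) → Prop) : ℝ :=
  ∑ ω ∈ Finset.univ.filter E, shiftMass K q ω

lemma sum_shiftMass (hq0 : 0 ≤ q) (hq1 : q < 1) : ∑ ω, shiftMass (ι := ι) K q ω = 1 := by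
  simp [shiftMass, ← Fintype.prod_sum, sum_geomMass hq0 hq1]

lemma shiftProb_eq_sum_filter (E : (ι → Fin (K + 1)) → Prop) [DecidablePred E] :
    shiftProb K q E = ∑ ω ∈ Finset.univ.filter E, shiftMass K q ω := by
  rw [shiftProb]
  congr

lemma shiftProb_mono (hq0 : 0 ≤ q) (hq1 : q < 1) {E F : (ι → Fin (K + 1)) → Prop}
    (h : ∀ ω, E ω → F ω) : shiftProb K q E ≤ shiftProb K q F := by
  classical
  exact Finset.sum_le_sum_of_subset_of_nonneg (Finset.monotone_filter_right _ fun ω _ => h ω)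
    fun ω _ _ => shiftMass_nonneg hq0 hq1 ω

lemma shiftProb_of_forall (hq0 : 0 ≤ q) (hq1 : q < 1) {E : (ι → Fin (K + 1)) → Prop}
    (h : ∀ ω, E ω) : shiftProb K q E = 1 := by
  classical
  rw [shiftProb, Finset.filter_true_of_mem fun ω _ => h ω, sum_shiftMass hq0 hq1]

lemma shiftProb_apply_mem (hq0 : 0 ≤ q) (hq1 : q < 1) (u : ι) (S : Finset (Fin (K + 1))) :
    shiftProb K q (fun ω => ω u ∈ S) = ∑ k ∈ S, geomMass K q k := by
  set f : ι → Fin (K + 1) → ℝ := fun i k => if i = u ∧ k ∉ S then 0 else geomMass K q k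
  have hprod (ω : ι → Fin (K + 1)) :
      ∏ i, f i (ω i) = if ω u ∈ S then shiftMass K q ω else 0 := by
    split_ifs with h
    · exact Finset.prod_congr rfl fun i _ => if_neg (by rintro ⟨rfl, hi⟩; exact hi h)
    · exact Finset.prod_eq_zero (Finset.mem_univ u) (if_pos ⟨rfl, h⟩)
  have hsum (i : ι) : ∑ k, f i k = if i = u then ∑ k ∈ S, geomMass K q k else 1 := by
    split_ifs with h
    · simp [f, h, Finset.sum_ite_mem]
    · simp [f, h, sum_geomMass hq0 hq1]
  rw [← Fintype.prod_ite_eq' u fun _ => ∑ k ∈ S, geomMass K q k,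
    ← Fintype.prod_congr _ _ hsum, Fintype.prod_sum, shiftProb, Finset.sum_filter]
  refine Finset.sum_congr rfl fun ω _ => ?_
  rw [hprod]
  split_ifs <;> rfl

end ShiftDistribution

section Raise

variable {ι : Type*} [DecidableEq ι] {K : ℕ} {q : ℝ}

def raise (u : ι) (s : ℕ) (ω : ι → Fin (K + 1)) : ι → Fin (K + 1) :=
  Function.update ω u ⟨min (ω u + s) K, Nat.lt_succ_of_le (min_le_right _ _)⟩

lemma raise_apply_self {u : ι} {s : ℕ} {ω : ι → Fin (K + 1)} (h : (ω u : ℕ) + s ≤ K) :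
    (raise u s ω u : ℕ) = ω u + s := by
  simp [raise, h]

lemma raise_apply_of_ne {u v : ι} (s : ℕ) (ω : ι → Fin (K + 1)) (h : v ≠ u) :
    raise u s ω v = ω v :=
  Function.update_of_ne h _ _

lemma shiftMass_raise [Fintype ι] {u : ι} {s : ℕ} {ω : ι → Fin (K + 1)}
    (h : (ω u : ℕ) + s ≤ K) : shiftMass K q (raise u s ω) = q ^ s * shiftMass K q ω := by
  have hrest :
      ∏ i ∈ {u}ᶜ, geomMass K q (raise u s ω i) = ∏ i ∈ {u}ᶜ, geomMass K q (ω i) :=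
    Finset.prod_congr rfl fun i hi =>
      by rw [raise_apply_of_ne s ω (Finset.mem_compl.1 hi ∘ Finset.mem_singleton.2)]
  rw [shiftMass, shiftMass, Fintype.prod_eq_mul_prod_compl u, Fintype.prod_eq_mul_prod_compl u,
    hrest, geomMass, geomMass, raise_apply_self h, pow_add]
  ring

lemma injOn_raise (u : ι) (s : ℕ) :
    Set.InjOn (raise (K := K) u s) {ω | (ω u : ℕ) + s ≤ K} := by
  intro ω hω ω' hω' heq
  funext v
  by_cases hv : v = u
  · subst hv
    have := congrArg (fun ω => (ω v : ℕ)) heq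
    simp only [raise_apply_self hω, raise_apply_self hω'] at this
    exact Fin.ext (by omega)
  · simpa [raise_apply_of_ne s _ hv] using congrFun heq v

lemma pow_mul_shiftProb_le_of_raise [Fintype ι] (hq0 : 0 ≤ q) (hq1 : q < 1) (u : ι) {s : ℕ}
    {P Q : (ι → Fin (K + 1)) → Prop}
    (hPQ : ∀ ω, P ω → (ω u : ℕ) + s ≤ K → Q (raise u s ω)) :
    q ^ s * shiftProb K q (fun ω => P ω ∧ (ω u : ℕ) + s ≤ K) ≤ shiftProb K q Q := by
  classical
  set A := Finset.univ.filter fun ω => P ω ∧ (ω u : ℕ) + s ≤ K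
  have hA {ω} (hω : ω ∈ A) : P ω ∧ (ω u : ℕ) + s ≤ K := (Finset.mem_filter.1 hω).2
  rw [shiftProb_eq_sum_filter, shiftProb_eq_sum_filter Q, Finset.mul_sum]
  calc ∑ ω ∈ A, q ^ s * shiftMass K q ω
      = ∑ ω ∈ A.image (raise u s), shiftMass K q ω := by
        rw [Finset.sum_image fun ω hω ω' hω' => injOn_raise u s (hA hω).2 (hA hω').2]
        exact Finset.sum_congr rfl fun ω hω => (shiftMass_raise (hA hω).2).symm
    _ ≤ ∑ ω ∈ Finset.univ.filter Q, shiftMass K q ω := by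
        refine Finset.sum_le_sum_of_subset_of_nonneg (fun ω' hω' => ?_)
          fun ω _ _ => shiftMass_nonneg hq0 hq1 ω
        obtain ⟨ω, hω, rfl⟩ := Finset.mem_image.1 hω'
        exact Finset.mem_filter.2 ⟨Finset.mem_univ _, hPQ ω (hA hω).1 (hA hω).2⟩

lemma shiftProb_le_add_tail [Fintype ι] (hq0 : 0 ≤ q) (hq1 : q < 1) (u : ι) {s : ℕ}
    (hs : s ≤ K + 1) (P : (ι → Fin (K + 1)) → Prop) :
    shiftProb K q P ≤ shiftProb K q (fun ω => P ω ∧ (ω u : ℕ) + s ≤ K) +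
      (q ^ (K + 1 - s) - q ^ (K + 1)) / (1 - q ^ (K + 1)) := by
  classical
  rw [← sum_geomMass_tail hq0 hq1 (Nat.sub_le _ _), ← shiftProb_apply_mem hq0 hq1 u,
    shiftProb_eq_sum_filter P, ← Finset.sum_filter_add_sum_filter_not _
      fun ω => (ω u : ℕ) + s ≤ K, Finset.filter_filter, Finset.filter_filter,
    ← shiftProb_eq_sum_filter, ← shiftProb_eq_sum_filter]
  refine add_le_add_right (shiftProb_mono hq0 hq1 fun ω h => ?_) _
  simp only [Finset.mem_filter, Finset.mem_univ, true_and]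
  omega

/-- Raising one coordinate by `s` multiplies the mass by `q ^ s`; it is only blocked on the event
that the coordinate exceeds `K - s`, whose mass is a geometric tail. -/
lemma shiftProb_le_of_raise [Fintype ι] (hq0 : 0 ≤ q) (hq1 : q < 1) (u : ι) {s : ℕ}
    (hs : s ≤ K + 1) {P Q : (ι → Fin (K + 1)) → Prop}
    (hPQ : ∀ ω, P ω → (ω u : ℕ) + s ≤ K → Q (raise u s ω)) :
    q ^ s * shiftProb K q P - q ^ (K + 1) * (1 - q ^ s) / (1 - q ^ (K + 1)) ≤
      shiftProb K q Q := by
  have hsplit := mul_le_mul_of_nonneg_left (shiftProb_le_add_tail hq0 hq1 u hs P)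
    (pow_nonneg hq0 s)
  have hpow : q ^ s * q ^ (K + 1 - s) = q ^ (K + 1) := by rw [← pow_add, Nat.add_sub_cancel' hs]
  rw [mul_add, mul_div_assoc', mul_sub, hpow,
    show q ^ (K + 1) - q ^ s * q ^ (K + 1) = q ^ (K + 1) * (1 - q ^ s) by ring] at hsplit
  linarith [pow_mul_shiftProb_le_of_raise hq0 hq1 u hPQ]

end Raise

lemma exp_neg_four_mul_le {d y n a : ℝ} (hd : 1 ≤ d) (hy : 0 ≤ y) (hyd : y ≤ d)
    (hn : n ≤ exp (2 * d)) (ha0 : 0 ≤ a) (ha : a ≤ exp (-(6 * d))) :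
    exp (-(4 * y)) ≤ exp (-y) - n * (a * (1 - exp (-y)) / (1 - a)) := by
  have ha2 : a ≤ 1 / 2 := by
    have : exp (-(6 * d)) * exp (6 * d) = 1 := by rw [← exp_add]; simp
    nlinarith [add_one_le_exp (6 * d), exp_pos (-(6 * d))]
  have hey0 : 0 ≤ 1 - exp (-y) := sub_nonneg.2 (exp_le_one_iff.2 (by linarith))
  have hey : 1 - exp (-y) ≤ y := by linarith [add_one_le_exp (-y)]
  have hloss : n * (a * (1 - exp (-y)) / (1 - a)) ≤ 2 * (y * exp (-(4 * y))) := by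
    calc n * (a * (1 - exp (-y)) / (1 - a)) ≤ exp (2 * d) * (exp (-(6 * d)) * y / (1 / 2)) := by
          gcongr <;> first | linarith | exact div_nonneg (mul_nonneg ha0 hey0) (by linarith)
      _ = 2 * (y * exp (-(4 * d))) := by
          rw [show -(4 * d) = 2 * d + -(6 * d) by ring, exp_add]
          ring
      _ ≤ 2 * (y * exp (-(4 * y))) := by gcongr
  have hgain : exp (-(4 * y)) + 3 * (y * exp (-(4 * y))) ≤ exp (-y) := by
    rw [show -y = 3 * y + -(4 * y) by ring, exp_add]
    nlinarith [add_one_le_exp (3 * y), exp_pos (-(4 * y))]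
  nlinarith [mul_nonneg hy (exp_pos (-(4 * y))).le]

section Gap

variable {ι : Type*} [Fintype ι] [DecidableEq ι] [Nonempty ι] {K : ℕ} {q : ℝ}

def score (ε : ℝ) (b : ι → ℝ) (ω : ι → Fin (K + 1)) (u : ι) : ℝ :=
  b u + ε * (ω u : ℕ)

lemma shiftProb_hasGap_ge (hq0 : 0 ≤ q) (hq1 : q < 1) (b : ι → ℝ) {ε t : ℝ} {s : ℕ}
    (hts : t < ε * s) (hs : s ≤ K + 1) (u : ι) :
    q ^ s * shiftProb K q (fun ω => argmax (score ε b ω) = u)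
        - q ^ (K + 1) * (1 - q ^ s) / (1 - q ^ (K + 1)) ≤
      shiftProb K q (fun ω => HasGap t (score ε b ω) u) := by
  refine shiftProb_le_of_raise hq0 hq1 u hs fun ω hu hL v hv => ?_
  have hle := le_argmax (score ε b ω) v
  rw [hu] at hle
  simp only [score, raise_apply_of_ne s ω hv, raise_apply_self hL] at hle ⊢
  push_cast
  linarith

/-- Because the gap events of distinct centres are disjoint, their probabilities add up. -/
lemma shiftProb_exists_hasGap_ge (hq0 : 0 ≤ q) (hq1 : q < 1) (b : ι → ℝ) {ε t : ℝ}
    {s : ℕ}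
    (ht : 0 ≤ t) (hts : t < ε * s) (hs : s ≤ K + 1) (Z : Finset ι)
    (hZ : ∀ ω : ι → Fin (K + 1), argmax (score ε b ω) ∈ Z) :
    q ^ s - Z.card * (q ^ (K + 1) * (1 - q ^ s) / (1 - q ^ (K + 1))) ≤
      shiftProb K q (fun ω => ∃ u, HasGap t (score ε b ω) u) := by
  classical
  have hwin : ∑ u ∈ Z, shiftProb K q (fun ω => argmax (score ε b ω) = u) = 1 := by
    simp only [shiftProb_eq_sum_filter]
    rw [Finset.sum_fiberwise_of_maps_to fun ω _ => hZ ω, sum_shiftMass hq0 hq1]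
  have hgap : ∑ u ∈ Z, shiftProb K q (fun ω => HasGap t (score ε b ω) u) ≤
      shiftProb K q (fun ω => ∃ u, HasGap t (score ε b ω) u) := by
    simp only [shiftProb_eq_sum_filter]
    rw [← Finset.sum_biUnion fun u _ u' _ hne => Finset.disjoint_filter.2
      fun ω _ hu hu' => hne (hu.eq hu' ht)]
    refine Finset.sum_le_sum_of_subset_of_nonneg (fun ω hω => ?_)
      fun ω _ _ => shiftMass_nonneg hq0 hq1 ω
    obtain ⟨u, -, hu⟩ := Finset.mem_biUnion.1 hω
    exact Finset.mem_filter.2 ⟨Finset.mem_univ _, u, (Finset.mem_filter.1 hu).2⟩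
  calc q ^ s - Z.card * (q ^ (K + 1) * (1 - q ^ s) / (1 - q ^ (K + 1)))
      = ∑ u ∈ Z, (q ^ s * shiftProb K q (fun ω => argmax (score ε b ω) = u)
          - q ^ (K + 1) * (1 - q ^ s) / (1 - q ^ (K + 1))) := by
        rw [Finset.sum_sub_distrib, ← Finset.mul_sum, hwin, Finset.sum_const, nsmul_eq_mul,
          mul_one]
    _ ≤ _ := (Finset.sum_le_sum fun u _ => shiftProb_hasGap_ge hq0 hq1 b hts hs u).trans hgap

/-- The shift `s` of the winner is chosen minimal with `ε * s > t`, so `ε * s ≤ t + ε`. -/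
lemma exp_le_shiftProb_exists_hasGap (b : ι → ℝ) {d ε t lam : ℝ} (hd : 1 ≤ d)
    (hε : 0 < ε) (ht : 0 ≤ t) (hlam : 0 < lam) (hK : 6 * d ≤ lam * (ε * K))
    (htd : lam * (t + ε) ≤ d)
    (Z : Finset ι) (hZ : (Z.card : ℝ) ≤ exp (2 * d))
    (hZ' : ∀ ω : ι → Fin (K + 1), argmax (score ε b ω) ∈ Z) :
    exp (-(4 * (lam * (t + ε)))) ≤
      shiftProb K (exp (-(lam * ε))) (fun ω => ∃ u, HasGap t (score ε b ω) u) := by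
  set s := ⌊t / ε⌋₊ + 1
  have hts : t < ε * s := by
    have := Nat.lt_floor_add_one (t / ε)
    rw [div_lt_iff₀ hε, mul_comm] at this
    exact_mod_cast this
  have hst : ε * s ≤ t + ε := by
    have := Nat.floor_le (div_nonneg ht hε.le)
    rw [le_div_iff₀ hε] at this
    push_cast [s]
    linarith
  have hsK : s ≤ K := by
    have : ε * s ≤ ε * K := by nlinarith
    exact_mod_cast le_of_mul_le_mul_left this hε
  have hq0 : 0 ≤ exp (-(lam * ε)) := (exp_pos _).le
  have hq1 : exp (-(lam * ε)) < 1 := exp_lt_one_iff.2 (by nlinarith)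
  have hqs : exp (-(lam * ε)) ^ s = exp (-(lam * (ε * s))) := by
    rw [← exp_nat_mul]; ring_nf
  have hqK : exp (-(lam * ε)) ^ (K + 1) ≤ exp (-(6 * d)) := by
    rw [← exp_nat_mul, exp_le_exp]
    push_cast
    nlinarith
  refine le_trans ?_ (shiftProb_exists_hasGap_ge hq0 hq1 b ht hts (by omega) Z hZ')
  rw [hqs]
  calc exp (-(4 * (lam * (t + ε)))) ≤ exp (-(4 * (lam * (ε * s)))) := by
        gcongr
    _ ≤ _ := exp_neg_four_mul_le hd (by positivity) (by nlinarith) hZ (by positivity) hqK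

end Gap

section Centers

variable {V : Type*} {G : SimpleGraph V} {w : Sym2 V → ℝ} {K : ℕ}

noncomputable def center (w : Sym2 V → ℝ) (G : SimpleGraph V) (N : Finset V) [Nonempty N]
    (ε : ℝ) (ω : N → Fin (K + 1)) (y : V) : N :=
  argmax (score ε (fun u : N => -wdist w G u y) ω)

noncomputable def centerPartition (w : Sym2 V → ℝ) (G : SimpleGraph V) (N : Finset V)
    [Nonempty N] (ε : ℝ) (ω : N → Fin (K + 1)) : Partition V :=
  Partition.ofFun (center w G N ε ω)

variable {N : Finset V} [Nonempty N] {ε : ℝ} {ω : N → Fin (K + 1)}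

lemma wdist_center_le {r : ℝ} (hcov : ∀ y, ∃ u ∈ N, wdist w G u y ≤ r) (hε : 0 ≤ ε)
    (y : V) : wdist w G (center w G N ε ω y) y ≤ r + ε * K := by
  obtain ⟨u, hu, huy⟩ := hcov y
  have hmax := le_argmax (score ε (fun u : N => -wdist w G u y) ω) ⟨u, hu⟩
  have hωK : ε * (ω (center w G N ε ω y) : ℕ) ≤ ε * K :=
    mul_le_mul_of_nonneg_left (by exact_mod_cast Fin.is_le _) hε
  have hω0 : 0 ≤ ε * (ω ⟨u, hu⟩ : ℕ) := by positivity
  simp only [score] at hmax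
  rw [center] at hωK ⊢
  linarith

lemma center_eq_of_sub_le {x y : V} {u : N} (h : center w G N ε ω x = u)
    (hxy : ∀ v : N, wdist w G u y - wdist w G v y ≤ wdist w G u x - wdist w G v x) :
    center w G N ε ω y = u :=
  argmax_eq_of_sub_le h fun v => by simp only [score]; linarith [hxy v]

lemma center_eq_of_mem_support [Finite V] (hw : ∀ e, 0 ≤ w e) (hG : G.Connected) {a x : V}
    {u : N} (h : center w G N ε ω a = u) (p : G.Walk u a) (hp : walkWeight w p = wdist w G u a)
    (hx : x ∈ p.support) : center w G N ε ω x = u :=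
  center_eq_of_sub_le h fun v => by
    linarith [wdist_add_wdist_le_walkWeight hw p hx, wdist_triangle hw hG v x a]

lemma center_eq_of_wdist_eq_zero [Finite V] (hw : ∀ e, 0 ≤ w e) (hG : G.Connected) {y z : V}
    (h : wdist w G z y = 0) : center w G N ε ω y = center w G N ε ω z :=
  center_eq_of_sub_le rfl fun v => by
    linarith [wdist_triangle hw hG (center w G N ε ω z : V) z y, wdist_triangle hw hG v y z,
      wdist_comm (w := w) (G := G) z y]

lemma center_eq_of_hasGap [Finite V] (hw : ∀ e, 0 ≤ w e) (hG : G.Connected) {y z : V} {ρ : ℝ}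
    {u : N} (h : HasGap (2 * ρ) (score ε (fun u : N => -wdist w G u z) ω) u)
    (hy : wdist w G z y ≤ ρ) : center w G N ε ω y = u :=
  argmax_eq_of_forall_lt fun v hv => by
    have := h v hv
    simp only [score] at this ⊢
    linarith [wdist_triangle hw hG v y z, wdist_triangle hw hG (u : V) z y,
      wdist_comm (w := w) (G := G) z y]

/-- Every vertex of a cluster is reached from its centre by a shortest path, which stays inside
the cluster. -/
lemma centerPartition_stronglyBounded [Finite V] (hw : ∀ e, 0 ≤ w e) (hG : G.Connected)
    {r : ℝ} (hcov : ∀ y, ∃ u ∈ N, wdist w G u y ≤ r) (hε : 0 ≤ ε)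
    (ω : N → Fin (K + 1)) :
    (centerPartition w G N ε ω).StronglyBounded w G (2 * (r + ε * K)) := by
  intro y
  refine stronglyBounded_of_forall_walk (u := (center w G N ε ω y : V)) fun a ha => ?_
  obtain ⟨p, hp⟩ := exists_walkWeight_eq_wdist hw hG (center w G N ε ω y : V) a
  refine ⟨p, ?_, fun x hx => center_eq_of_mem_support hw hG ha p hp hx⟩
  rw [hp, ← show center w G N ε ω a = center w G N ε ω y from ha]
  exact wdist_center_le hcov hε a

lemma ball_subset_cl_of_hasGap [Finite V] (hw : ∀ e, 0 ≤ w e) (hG : G.Connected) {z : V}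
    {ρ : ℝ} {u : N} (h : HasGap (2 * ρ) (score ε (fun u : N => -wdist w G u z) ω) u) :
    ball w G z ρ ⊆ (centerPartition w G N ε ω).cl z := fun y hy =>
  (center_eq_of_hasGap hw hG h hy).trans
    (center_eq_of_hasGap hw hG h (by rw [wdist_self hw]; exact (wdist_nonneg hw z y).trans hy)).symm

end Centers

lemma exists_nat_div_le {a δ : ℝ} (ha : 0 ≤ a) (hδ : 0 < δ) :
    ∃ K : ℕ, (0 : ℝ) < K ∧ a / K ≤ δ := by
  obtain ⟨K, hK⟩ := exists_nat_gt (a / δ)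
  have hK0 : (0 : ℝ) < K := lt_of_le_of_lt (by positivity) hK
  refine ⟨K, hK0, ?_⟩
  rw [div_lt_iff₀ hδ] at hK
  rw [div_le_iff₀ hK0]
  linarith

lemma two_rpow_le_exp {d : ℝ} (hd : 0 ≤ d) : (2 : ℝ) ^ d ≤ exp d := by
  rw [← exp_one_rpow]
  exact rpow_le_rpow (by norm_num) (by linarith [add_one_le_exp 1]) hd

section Padding

variable {V : Type*} [Fintype V] {G : SimpleGraph V} {w : Sym2 V → ℝ} {K : ℕ}

lemma card_filter_wdist_le_exp (hw : ∀ e, 0 ≤ w e) (hG : G.Connected) {d : ℝ} (hd : 0 ≤ d)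
    (hdoub : Doubling w G d) {N : Finset V} {r : ℝ} (hr : 0 < r)
    (hsep : ∀ u ∈ N, ∀ v ∈ N, u ≠ v → 2 * r < wdist w G u v) (z : V) :
    ((Finset.univ.filter fun u : N => wdist w G u z ≤ 4 * r).card : ℝ) ≤ exp (2 * d) := by
  rw [← Finset.card_map (Function.Embedding.subtype _)]
  calc _ ≤ (2 : ℝ) ^ d * 2 ^ d := by
        refine hdoub.card_le_of_separated hw hG (x := z) hr (fun u hu v hv => ?_) fun u hu => ?_
        · obtain ⟨u, -, rfl⟩ := Finset.mem_map.1 hu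
          obtain ⟨v, -, rfl⟩ := Finset.mem_map.1 hv
          exact hsep u u.2 v v.2
        · obtain ⟨u, hu', rfl⟩ := Finset.mem_map.1 hu
          rw [wdist_comm]
          exact (Finset.mem_filter.1 hu').2
    _ ≤ exp d * exp d := by gcongr <;> exact two_rpow_le_exp hd
    _ = exp (2 * d) := by rw [← exp_add, two_mul]

/-- A ball of radius below `ε` only contains points at distance zero from `z` and is never cut;
otherwise the padding event contains the event that some centre wins with gap `2 γ Δ`. -/
lemma exp_le_shiftProb_ball_subset_cl [DecidableEq V] (hw : ∀ e, 0 ≤ w e)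
    (hG : G.Connected) {d Δ ε : ℝ} (hd : 1 ≤ d) (hdoub : Doubling w G d) (hΔ : 0 < Δ)
    {N : Finset V} [Nonempty N]
    (hsep : ∀ u ∈ N, ∀ v ∈ N, u ≠ v → Δ / 4 < wdist w G u v)
    (hcov : ∀ y, ∃ u ∈ N, wdist w G u y ≤ Δ / 4) (hε : 0 < ε) (hεK : ε * K = Δ / 8)
    (hεδ : ∀ x y, 0 < wdist w G x y → ε ≤ wdist w G x y) (z : V) {γ : ℝ}
    (hγ0 : 0 ≤ γ) (hγ : γ ≤ 1 / 144) :
    exp (-(576 * d * γ)) ≤ shiftProb K (exp (-(48 * d / Δ * ε)))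
      (fun ω => ball w G z (γ * Δ) ⊆ (centerPartition w G N ε ω).cl z) := by
  have hq0 : 0 ≤ exp (-(48 * d / Δ * ε)) := (exp_pos _).le
  have hq1 : exp (-(48 * d / Δ * ε)) < 1 := exp_lt_one_iff.2 (neg_neg_of_pos (by positivity))
  rcases lt_or_ge (γ * Δ) ε with hsmall | hlarge
  · have hall (ω : N → Fin (K + 1)) :
        ball w G z (γ * Δ) ⊆ (centerPartition w G N ε ω).cl z :=
      fun y hy => center_eq_of_wdist_eq_zero hw hG <| le_antisymm
        (not_lt.1 fun hpos => (hsmall.trans_le (hεδ z y hpos)).not_ge hy) (wdist_nonneg hw z y)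
    rw [shiftProb_of_forall hq0 hq1 hall]
    exact exp_le_one_iff.2 (by nlinarith)
  have hrate : 48 * d / Δ * (2 * (γ * Δ) + ε) ≤ 144 * d * γ := by
    rw [div_mul_eq_mul_div, div_le_iff₀ hΔ]
    nlinarith
  calc exp (-(576 * d * γ)) ≤ exp (-(4 * (48 * d / Δ * (2 * (γ * Δ) + ε)))) := by
        rw [exp_le_exp]
        linarith
    _ ≤ shiftProb K (exp (-(48 * d / Δ * ε))) fun ω =>
          ∃ u, HasGap (2 * (γ * Δ)) (score ε (fun u : N => -wdist w G u z) ω) u := by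
        refine exp_le_shiftProb_exists_hasGap _ hd hε (by positivity) (by positivity) ?_
          (by nlinarith) (Finset.univ.filter fun u : N => wdist w G u z ≤ 4 * (Δ / 8))
          (card_filter_wdist_le_exp hw hG (by linarith) hdoub (by positivity)
            (fun u hu v hv huv => by linarith [hsep u hu v hv huv]) z)
          fun ω => Finset.mem_filter.2 ⟨Finset.mem_univ _,
            (wdist_center_le (ω := ω) hcov hε.le z).trans (by linarith)⟩
        rw [hεK]
        field_simp
        linarith
    _ ≤ _ := shiftProb_mono hq0 hq1 fun ω ⟨_, hu⟩ => ball_subset_cl_of_hasGap hw hG hu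

end Padding

end Pad

open Pad

/-- Graphs with doubling dimension `ddim` admit a strong
`(c·ddim, δ₀)`-padded decomposition scheme, for universal constants `c, δ₀ > 0`. -/
theorem doubling_strong_padded_decomposition_scheme :
    ∃ c δ₀ : ℝ, 0 < c ∧ 0 < δ₀ ∧
      ∀ (V : Type) [Fintype V], ∀ (G : SimpleGraph V), G.Connected →
      ∀ w : Sym2 V → ℝ, (∀ e, 0 ≤ w e) →
      ∀ ddim : ℝ, 1 ≤ ddim → Pad.Doubling w G ddim →
      ∀ Δ : ℝ, 0 < Δ →
      ∃ D : PMF (Pad.Partition V),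
        (∀ P ∈ D.support, Pad.Partition.StronglyBounded w G P Δ) ∧
        ∀ (z : V) (γ : ℝ), 0 ≤ γ → γ ≤ δ₀ →
          ENNReal.ofReal (Real.exp (-(c * ddim * γ))) ≤
            D.toOuterMeasure {P | Pad.ball w G z (γ * Δ) ⊆ P.cl z} := by
  refine ⟨576, 1 / 144, by norm_num, by norm_num, fun V _ G hG w hw d hd hdoub Δ hΔ => ?_⟩
  classical
  obtain ⟨N, hsep, hcov⟩ := exists_net (G := G) hw (r := Δ / 4) (by positivity)
  have : Nonempty N := let ⟨u, hu, _⟩ := hcov hG.nonempty.some; ⟨⟨u, hu⟩⟩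
  obtain ⟨δ, hδ, hδle⟩ := exists_pos_le_wdist (G := G) (w := w)
  obtain ⟨K, hK0, hεδ⟩ := exists_nat_div_le (a := Δ / 8) (by positivity) hδ
  set ε := Δ / 8 / K
  have hε : 0 < ε := div_pos (by positivity) hK0
  have hεK : ε * K = Δ / 8 := div_mul_cancel₀ _ hK0.ne'
  set q := Real.exp (-(48 * d / Δ * ε))
  have hq1 : q < 1 := Real.exp_lt_one_iff.2 (neg_neg_of_pos (by positivity))
  obtain ⟨D, hDsupp, hD⟩ := PMF.exists_toOuterMeasure_eq_sum (shiftMass K q)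
    (shiftMass_nonneg (Real.exp_pos _).le hq1) (sum_shiftMass (Real.exp_pos _).le hq1)
    (centerPartition w G N ε)
  refine ⟨D, fun P hP => ?_, fun z γ hγ0 hγ => ?_⟩
  · obtain ⟨ω, rfl⟩ := hDsupp hP
    exact fun y => ((centerPartition_stronglyBounded hw hG hcov hε.le ω) y).mono (by linarith)
  · rw [hD, ← shiftProb_eq_sum_filter]
    exact ENNReal.ofReal_le_ofReal <| exp_le_shiftProb_ball_subset_cl hw hG hd hdoub hΔ hsep hcov
      hε hεK (fun x y h => hεδ.trans (hδle x y h)) z hγ0 hγ
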